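/- (Characterization of the sail for parallel lines.) Let α, β be real affine forms on ℝ² whose linear parts are proportional and nonzero (parallel distinct lines H_α, H_β). Then x + iy ∈ S(α,β) (x,y ∈ ℝ²) if and only if α(x)β(x) < 0 and y is either zero or parallel to H_α (i.e., a·y = 0, where a is the common direction of the linear parts). -/

import Mathlib

open Complex

noncomputable def affC (a : ℝ × ℝ) (b : ℝ) (x y : ℝ × ℝ) : ℂ :=
  (a.1 : ℂ) * ((x.1 : ℂ) + (y.1 : ℂ) * I) +
  (a.2 : ℂ) * ((x.2 : ℂ) + (y.2 : ℂ) * I) + (b : ℂ)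

def sailMem (a : ℝ × ℝ) (b : ℝ) (c : ℝ × ℝ) (d : ℝ) (x y : ℝ × ℝ) : Prop :=
  affC a b x y * affC c d x y ≠ 0 ∧
  ∃ r : ℝ, r < 0 ∧ affC a b x y / affC c d x y = (r : ℂ)

/-!
Write `α(x + iy) = A + i v` with `A = a·x + b`, `v = a·y`; then `β(x + iy) = B + i λv` with
`B = λ(a·x) + d`. If `α = rβ` with `r` real and `v ≠ 0`, comparing imaginary parts gives `rλ = 1`,
and then comparing real parts gives `B = λA`, i.e. `d = λb`, contradicting distinctness of the lines.
So `v = 0`, both values are real, and their ratio is negative exactly when `AB < 0`.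
-/

@[simp]
lemma affC_re (a : ℝ × ℝ) (b : ℝ) (x y : ℝ × ℝ) :
    (affC a b x y).re = a.1 * x.1 + a.2 * x.2 + b := by simp [affC]

@[simp]
lemma affC_im (a : ℝ × ℝ) (b : ℝ) (x y : ℝ × ℝ) :
    (affC a b x y).im = a.1 * y.1 + a.2 * y.2 := by simp [affC]

def NegRatio (z w : ℂ) : Prop :=
  z * w ≠ 0 ∧ ∃ r : ℝ, r < 0 ∧ z / w = r

lemma sailMem_iff_negRatio (a : ℝ × ℝ) (b : ℝ) (c : ℝ × ℝ) (d : ℝ) (x y : ℝ × ℝ) :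
    sailMem a b c d x y ↔ NegRatio (affC a b x y) (affC c d x y) :=
  Iff.rfl

lemma negRatio_iff_exists_eq_mul {z w : ℂ} :
    NegRatio z w ↔ ∃ r : ℝ, r < 0 ∧ w ≠ 0 ∧ z = r * w := by
  constructor
  · rintro ⟨hzw, r, hr, hdiv⟩
    have hw : w ≠ 0 := right_ne_zero_of_mul hzw
    exact ⟨r, hr, hw, by rw [← hdiv, div_mul_cancel₀ z hw]⟩
  · rintro ⟨r, hr, hw, rfl⟩
    have hr0 : (r : ℂ) ≠ 0 := ofReal_ne_zero.mpr hr.ne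
    exact ⟨mul_ne_zero (mul_ne_zero hr0 hw) hw, r, hr, mul_div_cancel_right₀ _ hw⟩

lemma negRatio_ofReal_iff {A B : ℝ} : NegRatio A B ↔ A * B < 0 := by
  rw [negRatio_iff_exists_eq_mul]
  constructor
  · rintro ⟨r, hr, hB, hA⟩
    have hB' : B ≠ 0 := by exact_mod_cast hB
    have hA' : A = r * B := by exact_mod_cast hA
    have hB2 : 0 < B ^ 2 := by positivity
    calc A * B = r * B ^ 2 := by rw [hA']; ring
      _ < 0 := mul_neg_of_neg_of_pos hr hB2
  · intro h
    have hB : B ≠ 0 := by rintro rfl; simp at h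
    refine ⟨A / B, ?_, by exact_mod_cast hB, ?_⟩
    · rcases mul_neg_iff.mp h with ⟨hA, hB⟩ | ⟨hA, hB⟩
      · exact div_neg_of_pos_of_neg hA hB
      · exact div_neg_of_neg_of_pos hA hB
    · push_cast
      rw [div_mul_cancel₀ _ (by exact_mod_cast hB)]

lemma eq_ofReal_re_of_im_eq_zero {z : ℂ} (hz : z.im = 0) : z = (z.re : ℂ) :=
  Complex.ext rfl (by simp [hz])

lemma im_eq_zero_of_eq_ofReal_mul {z w : ℂ} {r lam : ℝ} (h : z = r * w)
    (him : w.im = lam * z.im) (hre : w.re ≠ lam * z.re) : z.im = 0 := by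
  have hzre : z.re = r * w.re := by rw [h]; simp
  have hzim : z.im = r * w.im := by rw [h]; simp
  by_contra hz
  have hrl : r * lam = 1 := by
    apply mul_left_cancel₀ hz
    linear_combination -hzim - r * him
  exact hre (by linear_combination -lam * hzre - w.re * hrl)

lemma negRatio_iff_of_im_eq_mul {z w : ℂ} {lam : ℝ}
    (him : w.im = lam * z.im) (hre : w.re ≠ lam * z.re) :
    NegRatio z w ↔ z.re * w.re < 0 ∧ z.im = 0 := by
  constructor
  · intro h
    obtain ⟨r, -, -, hzw⟩ := negRatio_iff_exists_eq_mul.mp h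
    have hz : z.im = 0 := im_eq_zero_of_eq_ofReal_mul hzw him hre
    have hw : w.im = 0 := by rw [him, hz, mul_zero]
    rw [eq_ofReal_re_of_im_eq_zero hz, eq_ofReal_re_of_im_eq_zero hw, negRatio_ofReal_iff] at h
    exact ⟨h, hz⟩
  · rintro ⟨h, hz⟩
    have hw : w.im = 0 := by rw [him, hz, mul_zero]
    rwa [eq_ofReal_re_of_im_eq_zero hz, eq_ofReal_re_of_im_eq_zero hw, negRatio_ofReal_iff]

theorem sail_parallel_characterization_general (a : ℝ × ℝ) (b d lam : ℝ) (x y : ℝ × ℝ)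
    (hdist : d ≠ lam * b) :
    sailMem a b (lam * a.1, lam * a.2) d x y ↔
      ((a.1 * x.1 + a.2 * x.2 + b) *
        (lam * a.1 * x.1 + lam * a.2 * x.2 + d) < 0 ∧
       (y = (0, 0) ∨ a.1 * y.1 + a.2 * y.2 = 0)) := by
  have him : (affC (lam * a.1, lam * a.2) d x y).im = lam * (affC a b x y).im := by
    simp only [affC_im]; ring
  have hre : (affC (lam * a.1, lam * a.2) d x y).re ≠ lam * (affC a b x y).re := by
    simp only [affC_re]
    contrapose! hdist
    linear_combination hdist
  have hy : y = (0, 0) → a.1 * y.1 + a.2 * y.2 = 0 := by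
    rintro rfl; simp
  rw [sailMem_iff_negRatio, negRatio_iff_of_im_eq_mul him hre, or_iff_right_of_imp hy]
  simp only [affC_re, affC_im]

/-- Characterization of the sail for parallel distinct lines: `α = a·x + b`,
`β = λ a·x + d` with `λ ≠ 0`, `a ≠ 0` and the lines distinct.  Then
`x + iy ∈ S(α,β)` iff `α(x)β(x) < 0` and `y` is zero or parallel to the
lines (`a·y = 0`). -/
theorem sail_parallel_characterization (a : ℝ × ℝ) (b d lam : ℝ) (x y : ℝ × ℝ)
    (hlam : lam ≠ 0) (ha : a ≠ (0, 0)) (hdist : d ≠ lam * b) :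
    sailMem a b (lam * a.1, lam * a.2) d x y ↔
      ((a.1 * x.1 + a.2 * x.2 + b) *
        (lam * a.1 * x.1 + lam * a.2 * x.2 + d) < 0 ∧
       (y = (0, 0) ∨ a.1 * y.1 + a.2 * y.2 = 0)) :=
  sail_parallel_characterization_general a b d lam x y hdist
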